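/- arXiv:1712.03438 — 5 statements merged into one kernel-verified Lean document; each statement's English description precedes it below -/
import Mathlib

section
/- For every finite instance I over a relational schema and every finite acyclic set Σ of tuple-generating dependencies, the chase of I with Σ terminates, i.e., there exists a finite instance J extending I such that J satisfies all tgds in Σ. -/
/-- Domain of values. -/
abbrev Val := ℕ
/-- Variables. -/
abbrev Var := ℕ
/-- Relation names. -/
abbrev RelName := ℕ
/-- A relational instance assigns a set of tuples to each relation name. -/
abbrev Instance := RelName → Set (List Val)

/-- Instance extension (inclusion). -/
def Instance.le (I J : Instance) : Prop := ∀ R, I R ⊆ J R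

/-- A relational atom `R(x₁,…,xₖ)`. -/
structure Atom where
  rel : RelName
  args : List Var

/-- Satisfaction of an atom under an assignment. -/
def holdsAtom (I : Instance) (ν : Var → Val) (a : Atom) : Prop :=
  a.args.map ν ∈ I a.rel

/-- A tuple-generating dependency, given by its body and head conjunctions. -/
structure TGD where
  body : List Atom
  head : List Atom

/-- Variables occurring in the body of a tgd. -/
def TGD.bodyVar (t : TGD) (v : Var) : Prop := ∃ a ∈ t.body, v ∈ a.args

/-- Satisfaction of a tgd: every assignment satisfying the body extends to one
satisfying the head. -/
def satTGD (I : Instance) (t : TGD) : Prop :=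
  ∀ ν : Var → Val, (∀ a ∈ t.body, holdsAtom I ν a) →
    ∃ ν' : Var → Val, (∀ v, t.bodyVar v → ν' v = ν v) ∧ ∀ a ∈ t.head, holdsAtom I ν' a

/-- A full tgd has no existential variables in its head. -/
def FullTGD (t : TGD) : Prop := ∀ a ∈ t.head, ∀ v ∈ a.args, t.bodyVar v

/-- A set of tgds is acyclic: the relation-dependency graph (edge from a body
relation to a head relation) has no cycle, witnessed by a rank function. -/
def AcyclicTGDs (ts : List TGD) : Prop :=
  ∃ rank : RelName → ℕ, ∀ t ∈ ts, ∀ a ∈ t.body, ∀ b ∈ t.head, rank a.rel < rank b.rel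

/-- Finiteness of an instance (finitely many facts overall). -/
def FiniteInst (I : Instance) : Prop := {p : RelName × List Val | p.2 ∈ I p.1}.Finite

/-- Relations appearing in heads of a set of tgds (the scope of a safe-scope procedure). -/
def headRels (ts : List TGD) : Set RelName := { R | ∃ t ∈ ts, ∃ b ∈ t.head, b.rel = R }

/-- Outcomes of applying a procedure with safe scope (identified with its set of
postcondition tgds): extensions of `I` satisfying the tgds, where all relations
outside the scope (the head relations) are unchanged. -/
def safeOutcomes (ts : List TGD) (I : Instance) : Set Instance :=
  { J | Instance.le I J ∧ (∀ t ∈ ts, satTGD J t) ∧ ∀ R, R ∉ headRels ts → I R = J R }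

/-- Outcomes of a sequence of procedures with safe scope. -/
def safeSeqOutcomes : List (List TGD) → Instance → Set Instance
  | [], I => {I}
  | Γ :: rest, I => ⋃ J ∈ safeOutcomes Γ I, safeSeqOutcomes rest J

/-- A boolean conjunctive query: a conjunction of atoms, all variables existential. -/
abbrev BCQ := List Atom

/-- Satisfaction of a boolean conjunctive query. -/
def holdsBCQ (I : Instance) (q : BCQ) : Prop :=
  ∃ ν : Var → Val, ∀ a ∈ q, holdsAtom I ν a

/-- The set of instances represented by a scoped knowledge base `(I, Γ, Scope)`. -/
def repSKB (I : Instance) (Γ : List TGD) (Scope : Set RelName) : Set Instance :=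
  { J | Instance.le I J ∧ (∀ t ∈ Γ, satTGD J t) ∧ ∀ R, R ∉ Scope → I R = J R }

/-- Minimal members of a set of instances. -/
def MinimalIn (S : Set Instance) (J : Instance) : Prop :=
  J ∈ S ∧ ∀ K ∈ S, Instance.le K J → K = J

/-- The set of facts of an instance. -/
def tupleSet (I : Instance) : Set (RelName × List Val) := {p | p.2 ∈ I p.1}


/-!
Run the oblivious chase in parallel rounds. Each round adds finitely many facts, since the new
facts only use values already present together with one constant witnessing every existential
variable. By induction on the rank that witnesses acyclicity, a relation `R` stops growing after
round `rank R + 1`: a trigger firing into `R` only uses relations of smaller rank, which were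
already stable one round earlier. After more rounds than the largest rank of a head relation,
every tgd has all of its head facts already present, i.e. it is satisfied.
-/

open Classical in
/-- All existential variables are witnessed by `0` rather than by fresh values, which satisfaction
of a tgd does not require. -/
noncomputable def TGD.zeroExtension (t : TGD) (ν : Var → Val) : Var → Val :=
  fun v => if t.bodyVar v then ν v else 0

/-- One round of the oblivious chase, firing every trigger of `Sig` in `J` simultaneously. -/
def chaseStep (Sig : List TGD) (J : Instance) : Instance :=
  fun R => J R ∪ {l | ∃ t ∈ Sig, ∃ b ∈ t.head, b.rel = R ∧
    ∃ ν : Var → Val, (∀ a ∈ t.body, holdsAtom J ν a) ∧ l = b.args.map (t.zeroExtension ν)}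

noncomputable def chase (Sig : List TGD) (I : Instance) (n : ℕ) : Instance :=
  (chaseStep Sig)^[n] I

def activeDomain (J : Instance) : Set Val := {x | ∃ p ∈ tupleSet J, x ∈ p.2}

lemma activeDomain_finite {J : Instance} (hJ : FiniteInst J) : (activeDomain J).Finite := by
  have : activeDomain J = ⋃ p ∈ tupleSet J, {x | x ∈ p.2} := by
    ext x; simp [activeDomain]
  rw [this]
  exact hJ.biUnion fun p _ => p.2.finite_toSet

lemma List.finite_length_eq_of_forall_mem {α : Type*} {s : Set α} (hs : s.Finite) (n : ℕ) :
    {l : List α | l.length = n ∧ ∀ x ∈ l, x ∈ s}.Finite := by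
  have := hs.to_subtype
  refine ((List.finite_length_eq s n).image (List.map Subtype.val)).subset ?_
  rintro l ⟨hlen, hmem⟩
  lift l to List s using hmem
  exact ⟨l, by simpa using hlen, rfl⟩

lemma headRels_finite (Sig : List TGD) : (headRels Sig).Finite := by
  have : headRels Sig = ⋃ t ∈ {t | t ∈ Sig}, ⋃ b ∈ {b | b ∈ t.head}, {b.rel} := by
    ext R; simp [headRels, eq_comm]
  rw [this]
  exact Sig.finite_toSet.biUnion fun t _ => t.head.finite_toSet.biUnion fun _ _ =>
    Set.finite_singleton _

lemma TGD.zeroExtension_mem_insert_activeDomain {J : Instance} {t : TGD} {ν : Var → Val}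
    (hbody : ∀ a ∈ t.body, holdsAtom J ν a) (v : Var) :
    t.zeroExtension ν v ∈ insert 0 (activeDomain J) := by
  by_cases hv : t.bodyVar v
  · obtain ⟨a, ha, hva⟩ := hv
    rw [TGD.zeroExtension, if_pos ⟨a, ha, hva⟩]
    exact Or.inr ⟨(a.rel, a.args.map ν), hbody a ha, List.mem_map_of_mem hva⟩
  · rw [TGD.zeroExtension, if_neg hv]
    exact Set.mem_insert _ _

section chase

variable {Sig : List TGD} {I J : Instance}

lemma le_chaseStep : J ≤ chaseStep Sig J :=
  fun _ => Set.subset_union_left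

lemma chase_succ (n : ℕ) : chase Sig I (n + 1) = chaseStep Sig (chase Sig I n) :=
  Function.iterate_succ_apply' _ _ _

lemma monotone_chase : Monotone (chase Sig I) :=
  monotone_nat_of_le_succ fun n => by rw [chase_succ]; exact le_chaseStep

lemma finiteInst_chaseStep (hJ : FiniteInst J) : FiniteInst (chaseStep Sig J) := by
  set V := insert 0 (activeDomain J)
  have hnew : (⋃ t ∈ {t | t ∈ Sig}, ⋃ b ∈ {b | b ∈ t.head},
      (b.rel, ·) '' {l : List Val | l.length = b.args.length ∧ ∀ x ∈ l, x ∈ V}).Finite :=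
    Sig.finite_toSet.biUnion fun t _ => t.head.finite_toSet.biUnion fun b _ =>
      ((List.finite_length_eq_of_forall_mem ((activeDomain_finite hJ).insert 0) _).image _)
  refine (hJ.union hnew).subset ?_
  rintro ⟨R, l⟩ (hold | ⟨t, ht, b, hb, rfl, ν, hbody, rfl⟩)
  · exact Or.inl hold
  · refine Or.inr (Set.mem_biUnion ht (Set.mem_biUnion hb ⟨_, ⟨List.length_map _, ?_⟩, rfl⟩))
    simp only [List.mem_map]
    rintro _ ⟨v, -, rfl⟩
    exact TGD.zeroExtension_mem_insert_activeDomain hbody v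

lemma finiteInst_chase (hI : FiniteInst I) (n : ℕ) : FiniteInst (chase Sig I n) := by
  induction n with
  | zero => exact hI
  | succ n ih => rw [chase_succ]; exact finiteInst_chaseStep ih

lemma chase_succ_subset_of_rank_lt {rank : RelName → ℕ}
    (hrank : ∀ t ∈ Sig, ∀ a ∈ t.body, ∀ b ∈ t.head, rank a.rel < rank b.rel) {n : ℕ} {R : RelName}
    (hR : rank R < n) : chase Sig I (n + 1) R ⊆ chase Sig I n R := by
  induction n generalizing R with
  | zero => omega
  | succ n ih =>
    rw [chase_succ (n + 1)]
    rintro l (hold | ⟨t, ht, b, hb, rfl, ν, hbody, rfl⟩)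
    · exact hold
    · have hbody_prev : ∀ a ∈ t.body, holdsAtom (chase Sig I n) ν a := fun a ha =>
        ih (by have := hrank t ht a ha b hb; omega) (hbody a ha)
      rw [chase_succ]
      exact Or.inr ⟨t, ht, b, hb, rfl, ν, hbody_prev, rfl⟩

lemma satTGD_of_chaseStep_subset {t : TGD} (ht : t ∈ Sig)
    (hstable : ∀ b ∈ t.head, chaseStep Sig J b.rel ⊆ J b.rel) : satTGD J t :=
  fun ν hbody => ⟨t.zeroExtension ν, fun _ hv => if_pos hv, fun b hb =>
    hstable b hb (Or.inr ⟨t, ht, b, hb, rfl, ν, hbody, rfl⟩)⟩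

end chase

/-- The chase of a finite instance with a finite acyclic set of tgds terminates:
there is a finite extension of `I` satisfying all the tgds. -/
theorem acyclic_chase_terminates
    (I : Instance) (hI : FiniteInst I)
    (Sig : List TGD) (hacyc : AcyclicTGDs Sig) :
    ∃ J : Instance, Instance.le I J ∧ FiniteInst J ∧ ∀ t ∈ Sig, satTGD J t := by
  obtain ⟨rank, hrank⟩ := hacyc
  obtain ⟨N, hN⟩ := ((headRels_finite Sig).image rank).bddAbove
  refine ⟨chase Sig I (N + 1), monotone_chase (Nat.zero_le _), finiteInst_chase hI _,
    fun t ht => satTGD_of_chaseStep_subset ht fun b hb => ?_⟩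
  rw [← chase_succ]
  exact chase_succ_subset_of_rank_lt hrank
    (Nat.lt_succ_of_le (hN ⟨b.rel, ⟨t, ht, b, hb, rfl⟩, rfl⟩))
end

section
/- There exist an instance I, a procedure P', and a family of procedures (P_i)_{i≥1}, all with safe scope and using only full tgds, such that for every i, any scoped knowledge base (J, Γ, Scope) representing outcomes_{P_i, P'}(I) must have an instance J containing at least 2^i tuples. -/
/-!
Every outcome of `P_i; P'` on `R = {0, 1}` contains the cube `{0, 1}^i` in `T`, and the smallest
outcome is exactly `R = {0, 1}`, `T = {0, 1}^i`. Suppose `(J, Γ, Scope)` represents the outcomes but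
`J` misses a cube tuple `t`. Deleting `t` from `T` in the smallest outcome gives an instance `K`
that still extends `J` and agrees with it outside `Scope`, yet is no outcome; so `K` violates a tgd
of `Γ`. Now pull `K` back along the map sending `0, 1` to a constant `c` with `cⁱ ≠ t` and `v + 2`
to `v`. The pullback is an outcome, hence a model of `Γ`, and since that map has the section
`v ↦ v + 2`, tgds satisfied by the pullback are satisfied by `K`: a contradiction. Hence `J`
contains all `2^i` cube tuples.
-/

def Instance.comap (h : Val → Val) (K : Instance) : Instance := fun R => {s | s.map h ∈ K R}

theorem holdsAtom_comap {h : Val → Val} {K : Instance} {ν : Var → Val} {a : Atom} :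
    holdsAtom (Instance.comap h K) ν a ↔ holdsAtom K (h ∘ ν) a := by
  simp [holdsAtom, Instance.comap]

theorem satTGD_of_satTGD_comap {h g : Val → Val} (hhg : Function.LeftInverse h g) {K : Instance}
    {t : TGD} (hs : satTGD (Instance.comap h K) t) : satTGD K t := by
  intro ν hν
  obtain ⟨ν', hν'ν, hhead⟩ := hs (g ∘ ν) fun a ha => by
    rw [holdsAtom_comap, ← Function.comp_assoc, hhg.comp_eq_id]
    exact hν a ha
  refine ⟨h ∘ ν', fun v hv => ?_, fun a ha => holdsAtom_comap.1 (hhead a ha)⟩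
  simp [hν'ν v hv, hhg (ν v)]

theorem FullTGD.satTGD_iff {t : TGD} (ht : FullTGD t) {K : Instance} :
    satTGD K t ↔ ∀ ν, (∀ a ∈ t.body, holdsAtom K ν a) → ∀ a ∈ t.head, holdsAtom K ν a := by
  refine ⟨fun hs ν hν a ha => ?_, fun hs ν hν => ⟨ν, fun _ _ => rfl, hs ν hν⟩⟩
  obtain ⟨ν', hν'ν, hhead⟩ := hs ν hν
  have hargs : a.args.map ν' = a.args.map ν := List.map_congr_left fun v hv => hν'ν v (ht a ha v hv)
  simpa [holdsAtom, hargs] using hhead a ha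

theorem mem_safeSeqOutcomes_pair {Γ₁ Γ₂ : List TGD} {I K : Instance} :
    K ∈ safeSeqOutcomes [Γ₁, Γ₂] I ↔ ∃ J ∈ safeOutcomes Γ₁ I, K ∈ safeOutcomes Γ₂ J := by
  simp [safeSeqOutcomes]

theorem le_ncard_or_infinite_of_le_encard {α : Type*} {s : Set α} {n : ℕ}
    (h : (n : ℕ∞) ≤ s.encard) : n ≤ s.ncard ∨ s.Infinite := by
  refine (Set.finite_or_infinite s).imp (fun hs => ?_) id
  exact_mod_cast hs.cast_ncard_eq ▸ h

namespace SKBBlowup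

/-! Relation `0` plays the role of the unary `R` and relation `1` that of `T`. -/

def cube (i : ℕ) : Set (List Val) := {s | s.length = i ∧ ∀ v ∈ s, v < 2}

def baseInst : Instance := fun R => if R = 0 then {[0], [1]} else ∅

/-- `R(x₀) ∧ … ∧ R(x_{i-1}) → T(x₀, …, x_{i-1})`. -/
def copyTGD (i : ℕ) : TGD := ⟨(List.range i).map fun j => ⟨0, [j]⟩, [⟨1, List.range i⟩]⟩

/-- `T(x₀) → R(x₀)`. -/
def projTGD : TGD := ⟨[⟨1, [0]⟩], [⟨0, [0]⟩]⟩

def outcomeSet (i : ℕ) : Set Instance :=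
  {K | cube i ⊆ K 1 ∧ {[0], [1]} ⊆ K 0 ∧ (∀ v, [v] ∈ K 1 → [v] ∈ K 0) ∧
    ∀ R, R ≠ 0 → R ≠ 1 → K R = ∅}

def minOutcome (i : ℕ) : Instance :=
  fun R => if R = 0 then {[0], [1]} else if R = 1 then cube i else ∅

def collapse (c : Val) (v : Val) : Val := if v < 2 then c else v - 2

theorem collapse_leftInverse (c : Val) : Function.LeftInverse (collapse c) (· + 2) := by
  intro v
  simp [collapse]

theorem fullTGD_copyTGD (i : ℕ) : FullTGD (copyTGD i) := by
  simp [FullTGD, TGD.bodyVar, copyTGD]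

theorem fullTGD_projTGD : FullTGD projTGD := by
  simp [FullTGD, TGD.bodyVar, projTGD]

theorem acyclicTGDs_copyTGD (i : ℕ) : AcyclicTGDs [copyTGD i] :=
  ⟨id, by simp [copyTGD]⟩

theorem acyclicTGDs_projTGD : AcyclicTGDs [projTGD] :=
  ⟨fun R => if R = 0 then 1 else 0, by simp [projTGD]⟩

theorem headRels_copyTGD (i : ℕ) : headRels [copyTGD i] = {1} := by
  ext R
  simp [headRels, copyTGD, eq_comm]

theorem headRels_projTGD : headRels [projTGD] = {0} := by
  ext R
  simp [headRels, projTGD, eq_comm]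

theorem satTGD_copyTGD_iff {i : ℕ} {K : Instance} (hK : K 0 = {[0], [1]}) :
    satTGD K (copyTGD i) ↔ cube i ⊆ K 1 := by
  have hR : ∀ v : Val, [v] ∈ K 0 ↔ v < 2 := fun v => by
    simp [hK, Nat.le_one_iff_eq_zero_or_eq_one]
  rw [(fullTGD_copyTGD i).satTGD_iff]
  simp only [copyTGD, holdsAtom, List.forall_mem_map, List.mem_range, List.map_cons, List.map_nil,
    hR, List.mem_singleton, forall_eq]
  refine ⟨fun hs s ⟨hlen, hs2⟩ => ?_, fun hcube ν hν => hcube ⟨by simp, by simpa using hν⟩⟩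
  have hs' : (List.range i).map (fun j => s.getD j 0) = s := by
    apply List.ext_getElem <;> simp +contextual [hlen]
  rw [← hs']
  exact hs _ fun j hj => by
    simpa [List.getElem?_eq_getElem (hlen ▸ hj)] using hs2 _ (List.getElem_mem _)

theorem satTGD_projTGD_iff {K : Instance} :
    satTGD K projTGD ↔ ∀ v, [v] ∈ K 1 → [v] ∈ K 0 := by
  rw [fullTGD_projTGD.satTGD_iff]
  simpa [projTGD, holdsAtom] using ⟨fun h v => h fun _ => v, fun h ν => h (ν 0)⟩

theorem mem_safeOutcomes_copyTGD_iff {i : ℕ} {J : Instance} :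
    J ∈ safeOutcomes [copyTGD i] baseInst ↔
      J 0 = {[0], [1]} ∧ cube i ⊆ J 1 ∧ ∀ R, R ≠ 0 → R ≠ 1 → J R = ∅ := by
  simp only [safeOutcomes, headRels_copyTGD, Set.mem_ofPred_eq, Set.mem_singleton_iff,
    List.forall_mem_singleton]
  constructor
  · rintro ⟨-, hsat, hJ⟩
    have hJ0 : J 0 = {[0], [1]} := by simpa [baseInst] using (hJ 0 zero_ne_one).symm
    refine ⟨hJ0, (satTGD_copyTGD_iff hJ0).1 hsat, fun R h0 h1 => ?_⟩
    simpa [baseInst, h0] using (hJ R h1).symm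
  · rintro ⟨hJ0, hcube, hJ⟩
    refine ⟨fun R => ?_, (satTGD_copyTGD_iff hJ0).2 hcube, fun R h1 => ?_⟩
    · by_cases h0 : R = 0 <;> simp [baseInst, h0, hJ0]
    · by_cases h0 : R = 0
      · simp [baseInst, h0, hJ0]
      · simp [baseInst, h0, hJ R h0 h1]

theorem mem_safeOutcomes_projTGD_iff {J K : Instance} :
    K ∈ safeOutcomes [projTGD] J ↔
      Instance.le J K ∧ (∀ v, [v] ∈ K 1 → [v] ∈ K 0) ∧ ∀ R, R ≠ 0 → J R = K R := by
  simp [safeOutcomes, headRels_projTGD, satTGD_projTGD_iff]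

theorem safeSeqOutcomes_eq_outcomeSet (i : ℕ) :
    safeSeqOutcomes [[copyTGD i], [projTGD]] baseInst = outcomeSet i := by
  ext K
  simp only [mem_safeSeqOutcomes_pair, mem_safeOutcomes_copyTGD_iff, mem_safeOutcomes_projTGD_iff]
  constructor
  · rintro ⟨J, ⟨hJ0, hcube, hJ⟩, hJK, hproj, hK⟩
    refine ⟨hK 1 one_ne_zero ▸ hcube, hJ0 ▸ hJK 0, hproj, fun R h0 h1 => ?_⟩
    rw [← hK R h0, hJ R h0 h1]
  · rintro ⟨hcube, h0, hproj, hK⟩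
    refine ⟨Function.update K 0 {[0], [1]}, ⟨by simp, by simpa using hcube, fun R h0 h1 => ?_⟩,
      fun R => ?_, hproj, fun R hR => by simp [hR]⟩
    · simp [h0, hK R h0 h1]
    · rcases eq_or_ne R 0 with rfl | hR
      · simpa using h0
      · simp [hR]

theorem minOutcome_mem_outcomeSet (i : ℕ) : minOutcome i ∈ outcomeSet i := by
  refine ⟨by simp [minOutcome], by simp [minOutcome], fun v hv => ?_,
    fun R h0 h1 => by simp [minOutcome, h0, h1]⟩
  simp only [minOutcome, one_ne_zero, if_false, if_true] at hv ⊢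
  simpa [Nat.lt_succ_iff, Nat.le_one_iff_eq_zero_or_eq_one] using hv.2

theorem exists_replicate_ne {i : ℕ} (hi : i ≠ 0) (t : List Val) :
    ∃ c < 2, List.replicate i c ≠ t := by
  by_contra! h
  exact zero_ne_one ((List.replicate_right_inj hi).1 ((h 0 two_pos).trans (h 1 one_lt_two).symm))

theorem comap_collapse_mem_outcomeSet {i : ℕ} {c : Val} (hc : c < 2) {t : List Val}
    (hct : List.replicate i c ≠ t) :
    Instance.comap (collapse c) (Function.update (minOutcome i) 1 (cube i \ {t})) ∈
      outcomeSet i := by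
  have hR : ∀ v : Val, v < 2 → [v] ∈ minOutcome i 0 := fun v hv => by
    simpa [minOutcome] using Nat.le_one_iff_eq_zero_or_eq_one.1 (Nat.lt_succ_iff.1 hv)
  refine ⟨fun s hs => ?_, ?_, fun v hv => ?_, fun R h0 h1 => ?_⟩
  · have hs' : s.map (collapse c) = List.replicate i c :=
      List.eq_replicate_iff.2 ⟨by simp [hs.1], fun b hb => by
        obtain ⟨v, hv, rfl⟩ := List.mem_map.1 hb
        simp [collapse, hs.2 v hv]⟩
    simp only [Instance.comap, Set.mem_ofPred_eq, hs', Function.update_self]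
    exact ⟨⟨by simp, by simp [Nat.le_of_lt_succ hc]⟩, hct⟩
  · rintro _ (rfl | rfl) <;> simpa [Instance.comap, collapse] using hR c hc
  · simp only [Instance.comap, Set.mem_ofPred_eq, List.map_cons, List.map_nil,
      Function.update_self] at hv ⊢
    simpa using hR _ (hv.1.2 _ (List.mem_singleton_self _))
  · ext s
    simp [Instance.comap, minOutcome, h0, h1]

theorem cube_subset_of_repSKB_eq {i : ℕ} (hi : i ≠ 0) {J : Instance} {Γ : List TGD}
    {Scope : Set RelName} (hrep : repSKB J Γ Scope = outcomeSet i) : cube i ⊆ J 1 := by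
  intro t ht
  by_contra htJ
  obtain ⟨hJmin, -, hscope⟩ : minOutcome i ∈ repSKB J Γ Scope :=
    hrep ▸ minOutcome_mem_outcomeSet i
  have hT : (1 : RelName) ∈ Scope := by
    by_contra h
    exact htJ (by rw [hscope 1 h]; simpa [minOutcome] using ht)
  obtain ⟨c, hc, hct⟩ := exists_replicate_ne hi t
  set K := Function.update (minOutcome i) 1 (cube i \ {t})
  have hJK : Instance.le J K := by
    intro R s hs
    rcases eq_or_ne R 1 with rfl | hR
    · simpa [K, minOutcome] using ⟨hJmin 1 hs, fun h => htJ (h ▸ hs)⟩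
    · simpa [K, hR] using hJmin R hs
  have hcomap : Instance.comap (collapse c) K ∈ repSKB J Γ Scope :=
    hrep ▸ comap_collapse_mem_outcomeSet hc hct
  have hK : K ∈ repSKB J Γ Scope :=
    ⟨hJK, fun γ hγ => satTGD_of_satTGD_comap (collapse_leftInverse c) (hcomap.2.1 γ hγ),
      fun R hR => by simp [K, hscope R hR, (ne_of_mem_of_not_mem hT hR).symm]⟩
  simpa [K] using (hrep ▸ hK : K ∈ outcomeSet i).1 ht

theorem two_pow_le_encard_cube (i : ℕ) : 2 ^ i ≤ (cube i).encard := by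
  let f : (Fin i → Fin 2) → List Val := fun x => List.ofFn fun j => (x j : ℕ)
  have hf : Function.Injective f := fun x y h =>
    funext fun j => Fin.ext (congrFun (List.ofFn_injective h) j)
  calc (2 ^ i : ℕ∞) = (Set.univ : Set (Fin i → Fin 2)).encard := by simp [Set.encard_univ]
    _ = (f '' Set.univ).encard := (hf.encard_image _).symm
    _ ≤ (cube i).encard := Set.encard_le_encard <| by
      rintro _ ⟨x, -, rfl⟩
      exact ⟨by simp [f], by simp [f, Fin.is_le]⟩

theorem two_pow_le_encard_tupleSet {i : ℕ} {J : Instance} (h : cube i ⊆ J 1) :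
    2 ^ i ≤ (tupleSet J).encard :=
  calc 2 ^ i ≤ (cube i).encard := two_pow_le_encard_cube i
    _ = (Prod.mk (1 : RelName) '' cube i).encard :=
      ((Prod.mk_right_injective 1).encard_image _).symm
    _ ≤ (tupleSet J).encard := Set.encard_le_encard <| by
      rintro _ ⟨s, hs, rfl⟩
      exact h hs

end SKBBlowup

/-- Exponential lower bound on SKB representations: there are an instance `I`,
a procedure `P'` and a family of procedures `P_i`, all with safe scope and
using only full tgds, such that any SKB `(J, Γ, Scope)` representing
`outcomes_{P_i,P'}(I)` must have at least `2^i` tuples in `J`. -/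
theorem skb_representation_exponential_blowup :
    ∃ (I : Instance) (P' : List TGD) (Pfam : ℕ → List TGD),
      AcyclicTGDs P' ∧ (∀ t ∈ P', FullTGD t) ∧
      (∀ i, AcyclicTGDs (Pfam i) ∧ ∀ t ∈ Pfam i, FullTGD t) ∧
      ∀ i, 1 ≤ i →
        ∀ (J : Instance) (Γ : List TGD) (Scope : Set RelName),
          repSKB J Γ Scope = safeSeqOutcomes [Pfam i, P'] I →
          2 ^ i ≤ (tupleSet J).ncard ∨ (tupleSet J).Infinite := by
  refine ⟨SKBBlowup.baseInst, [SKBBlowup.projTGD], fun i => [SKBBlowup.copyTGD i],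
    SKBBlowup.acyclicTGDs_projTGD, by simpa using SKBBlowup.fullTGD_projTGD,
    fun i => ⟨SKBBlowup.acyclicTGDs_copyTGD i, by simpa using SKBBlowup.fullTGD_copyTGD i⟩,
    fun i hi J Γ Scope hrep => le_ncard_or_infinite_of_le_encard ?_⟩
  rw [SKBBlowup.safeSeqOutcomes_eq_outcomeSet] at hrep
  exact_mod_cast SKBBlowup.two_pow_le_encard_tupleSet
    (SKBBlowup.cube_subset_of_repSKB_eq (Nat.one_le_iff_ne_zero.1 hi) hrep)
end

section
/- For every procedure with safe scope P (with tgd postconditions Σ) and every pair of instances I* ⊆ I over the same schema: every instance in outcomes_P(I) extends some minimal instance of outcomes_P(I*), provided every assignment satisfying a left-hand side of a tgd of Σ in I* also does so in I (which holds since I* ⊆ I). -/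
/-! Chase `I*` inside `J`: fire the tgds of `Γ` starting from `I*`, taking the head witnesses
from `J`, which contains `I*` and satisfies `Γ`. The result lies below `J`, satisfies `Γ`, and
differs from `I*` only on head relations, so it is an outcome for `I*`. It is finite because
`Γ` is acyclic: the facts whose relation has rank `≤ r` come from `I*` or from finitely many
firings on facts of rank `< r`. Below a finite outcome there is a minimal one. -/

open Set

theorem FiniteInst.mono {I J : Instance} (h : I ≤ J) (hJ : FiniteInst J) : FiniteInst I :=
  hJ.subset fun p hp => h p.1 hp

theorem finite_setOf_le {L : Instance} (hL : FiniteInst L) : {M : Instance | M ≤ L}.Finite :=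
  (hL.finite_subsets.image fun s R => {l | (R, l) ∈ s}).subset
    fun M hM => ⟨tupleSet M, fun p hp => hM p.1 hp, rfl⟩

theorem exists_minimalIn_le {S : Set Instance} {L : Instance} (hL : L ∈ S) (hfin : FiniteInst L) :
    ∃ M, MinimalIn S M ∧ M ≤ L := by
  obtain ⟨M, hML, hM⟩ :=
    ((finite_setOf_le hfin).inter_of_right S).isPWO.exists_le_minimal ⟨hL, le_refl L⟩
  refine ⟨M, ⟨hM.prop.1, fun K hK hKM => ?_⟩, hML⟩
  have hKM : K ≤ M := hKM
  exact le_antisymm hKM (hM.2 ⟨hK, hKM.trans hML⟩ hKM)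

theorem finite_headRels (Γ : List TGD) : (headRels Γ).Finite :=
  (Γ.finite_toSet.biUnion fun t _ => t.head.finite_toSet.image Atom.rel).subset
    fun _ ⟨_, ht, b, hb, hR⟩ => mem_biUnion ht ⟨b, hb, hR⟩

namespace TGD

theorem finite_setOf_bodyVar (t : TGD) : {v | t.bodyVar v}.Finite :=
  (t.body.finite_toSet.biUnion fun a _ => a.args.finite_toSet).subset
    fun _ ⟨_, ha, hv⟩ => mem_biUnion ha hv

noncomputable def restrict (t : TGD) (ν : Var → Val) : Var → Val :=
  {v | t.bodyVar v}.indicator ν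

theorem restrict_of_bodyVar {t : TGD} {v : Var} (hv : t.bodyVar v) (ν : Var → Val) :
    t.restrict ν v = ν v :=
  indicator_of_mem (show v ∈ {v | t.bodyVar v} from hv) ν

theorem holdsAtom_restrict_iff {t : TGD} {a : Atom} (ha : a ∈ t.body) (I : Instance)
    (ν : Var → Val) : holdsAtom I (t.restrict ν) a ↔ holdsAtom I ν a := by
  rw [holdsAtom, holdsAtom, List.map_congr_left fun v hv => restrict_of_bodyVar ⟨a, ha, hv⟩ ν]

theorem finite_restrict_image (t : TGD) {L : Instance} (hL : FiniteInst L) :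
    (t.restrict '' {ν | ∀ a ∈ t.body, holdsAtom L ν a}).Finite := by
  have hvals : {x | ∃ p ∈ tupleSet L, x ∈ p.2}.Finite :=
    (hL.biUnion fun p _ => p.2.finite_toSet).subset fun _ ⟨p, hp, hx⟩ => mem_biUnion hp hx
  have := t.finite_setOf_bodyVar.to_subtype
  refine Finite.of_finite_image (f := fun μ (v : {v | t.bodyVar v}) => μ v)
    ((Finite.pi fun _ => hvals).subset ?_) ?_
  · rintro _ ⟨_, ⟨ν, hν, rfl⟩, rfl⟩ ⟨v, a, ha, hva⟩ -
    refine ⟨(a.rel, a.args.map ν), hν a ha, ?_⟩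
    show t.restrict ν v ∈ a.args.map ν
    exact restrict_of_bodyVar ⟨a, ha, hva⟩ ν ▸ List.mem_map_of_mem hva
  · rintro _ ⟨ν, -, rfl⟩ _ ⟨ν', -, rfl⟩ h
    funext v
    by_cases hv : t.bodyVar v
    · exact congrFun h ⟨v, hv⟩
    · simp [restrict, hv]

end TGD

/-- A firing of `t` on `ν` takes the head witness `w t (t.restrict ν)`, which depends only on the
body values of `ν`: finitely many facts thus give rise to finitely many new facts. -/
inductive Chase (Γ : List TGD) (w : TGD → (Var → Val) → Var → Val) (I : Instance) :
    Instance
  | base {R : RelName} {l : List Val} : l ∈ I R → Chase Γ w I R l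
  | fire {t : TGD} {ν : Var → Val} {b : Atom} : t ∈ Γ →
      (∀ a ∈ t.body, Chase Γ w I a.rel (a.args.map ν)) → b ∈ t.head →
      Chase Γ w I b.rel (b.args.map (w t (t.restrict ν)))

section Chase

variable {Γ : List TGD} {w : TGD → (Var → Val) → Var → Val} {I : Instance}

theorem le_chase : I ≤ Chase Γ w I := fun _ _ => Chase.base

theorem chase_le {K : Instance} (hIK : I ≤ K)
    (hw : ∀ t ∈ Γ, ∀ ν, (∀ a ∈ t.body, holdsAtom K ν a) →
      ∀ b ∈ t.head, holdsAtom K (w t ν) b) :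
    Chase Γ w I ≤ K := by
  intro R l h
  induction h with
  | base h => exact hIK _ h
  | fire ht _ hb ih =>
    exact hw _ ht _ (fun a ha => (TGD.holdsAtom_restrict_iff ha K _).2 (ih a ha)) _ hb

theorem satTGD_chase {t : TGD} (ht : t ∈ Γ)
    (hw : ∀ ν, (∀ a ∈ t.body, holdsAtom (Chase Γ w I) ν a) →
      ∀ v, t.bodyVar v → w t ν v = ν v) :
    satTGD (Chase Γ w I) t := fun ν hν =>
  have hν' a ha := (TGD.holdsAtom_restrict_iff ha _ ν).2 (hν a ha)
  ⟨w t (t.restrict ν), fun v hv => (hw _ hν' v hv).trans (TGD.restrict_of_bodyVar hv ν),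
    fun _ hb => Chase.fire ht hν hb⟩

theorem chase_eq_of_notMem_headRels {R : RelName} (hR : R ∉ headRels Γ) :
    Chase Γ w I R = I R := by
  refine Subset.antisymm (fun l h => ?_) (le_chase R)
  cases h with
  | base h => exact h
  | fire ht _ hb => exact absurd ⟨_, ht, _, hb, rfl⟩ hR

theorem finiteInst_chase_rank_lt {rank : RelName → ℕ}
    (hrank : ∀ t ∈ Γ, ∀ a ∈ t.body, ∀ b ∈ t.head, rank a.rel < rank b.rel)
    (hI : FiniteInst I) (r : ℕ) : FiniteInst fun R => {l | l ∈ Chase Γ w I R ∧ rank R < r} := by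
  induction r with
  | zero => simp [FiniteInst]
  | succ r ih =>
    refine (hI.union (Γ.finite_toSet.biUnion fun t _ => t.head.finite_toSet.biUnion fun b _ =>
      (t.finite_restrict_image ih).image fun μ => (b.rel, b.args.map (w t μ)))).subset ?_
    rintro ⟨R, l⟩ ⟨h, hr⟩
    cases h with
    | base h => exact Or.inl h
    | @fire t ν b ht hbody hb =>
      refine Or.inr (mem_biUnion ht (mem_biUnion hb ⟨_, ⟨ν, fun a ha => ?_, rfl⟩, rfl⟩))
      exact ⟨hbody a ha, lt_of_lt_of_le (hrank t ht a ha b hb) (Nat.le_of_lt_succ hr)⟩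

theorem finiteInst_chase_s10 (hacyc : AcyclicTGDs Γ) (hI : FiniteInst I) :
    FiniteInst (Chase Γ w I) := by
  obtain ⟨rank, hrank⟩ := hacyc
  obtain ⟨B, hB⟩ := ((finite_headRels Γ).image rank).bddAbove
  refine (hI.union (finiteInst_chase_rank_lt (w := w) hrank hI (B + 1))).subset ?_
  rintro ⟨R, l⟩ h
  by_cases hR : R ∈ headRels Γ
  · exact Or.inr ⟨h, Nat.lt_succ_of_le (hB (mem_image_of_mem rank hR))⟩
  · exact Or.inl ((chase_eq_of_notMem_headRels (w := w) (I := I) hR).subset h)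

end Chase

theorem exists_finiteInst_mem_safeOutcomes_le {Γ : List TGD} {I K : Instance}
    (hacyc : AcyclicTGDs Γ) (hI : FiniteInst I) (hIK : I ≤ K) (hK : ∀ t ∈ Γ, satTGD K t) :
    ∃ L ∈ safeOutcomes Γ I, FiniteInst L ∧ L ≤ K := by
  choose! w hw using hK
  have hCK : Chase Γ w I ≤ K := chase_le hIK fun t ht ν hν => (hw t ht ν hν).2
  refine ⟨Chase Γ w I, ⟨le_chase, fun t ht => ?_, fun R hR => ?_⟩,
    finiteInst_chase_s10 hacyc hI, hCK⟩
  · exact satTGD_chase ht fun ν hν => (hw t ht ν fun a ha => hCK _ (hν a ha)).1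
  · exact (chase_eq_of_notMem_headRels hR).symm

/-- For a procedure with safe scope (acyclic tgd postconditions `Γ`) and
instances `I* ⊆ I`, every instance in `outcomes_P(I)` extends some minimal
instance of `outcomes_P(I*)`.  (The proviso that every assignment firing a tgd
body over `I*` also fires over `I` holds automatically since `I* ⊆ I`.) -/
theorem outcomes_extend_minimal_of_subinstance
    (Γ : List TGD) (hacyc : AcyclicTGDs Γ)
    (Istar I : Instance) (hle : Instance.le Istar I) (hfin : FiniteInst I)
    (J : Instance) (hJ : J ∈ safeOutcomes Γ I) :
    ∃ M, MinimalIn (safeOutcomes Γ Istar) M ∧ Instance.le M J := by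
  obtain ⟨hIJ, hJsat, -⟩ := hJ
  obtain ⟨L, hL, hLfin, hLJ⟩ :=
    exists_finiteInst_mem_safeOutcomes_le hacyc (hfin.mono hle) (le_trans hle hIJ) hJsat
  obtain ⟨M, hM, hML⟩ := exists_minimalIn_le hL hLfin
  exact ⟨M, hM, le_trans hML hLJ⟩
end

section
/- There exist two fixed procedures P_T and P_R with safe scope over unary relations R, S, T such that the outcome of the sequence (P_T, P_R) applied to the instance I with R^I = {1}, S^I = T^I = ∅ contains an instance violating the tgd R(x) → T(x); concretely, the instance K with R^K = {1,2}, T^K = {1}, S^K = ∅ belongs to outcomes_{P_T,P_R}(I). -/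
/- Relations: `R` is 0, `S` is 1, `T` is 2; variable `x` is 0. -/
def atomR : Atom := ⟨0, [0]⟩
def atomS : Atom := ⟨1, [0]⟩
def atomT : Atom := ⟨2, [0]⟩

/-- Postconditions of `P_T`: `R(x) → T(x)` and `S(x) → T(x)`. -/
def GammaT : List TGD := [⟨[atomR], [atomT]⟩, ⟨[atomS], [atomT]⟩]

/-- Postconditions of `P_R`: `S(x) → R(x)`. -/
def GammaR : List TGD := [⟨[atomS], [atomR]⟩]

/-- The instance `I` with `R^I = {1}`, `S^I = T^I = ∅`. -/
def instI : Instance := fun R => if R = 0 then {[1]} else ∅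

/-- The instance `K` with `R^K = {1,2}`, `T^K = {1}`, `S^K = ∅`. -/
def instK : Instance := fun R =>
  if R = 0 then {[1], [2]} else if R = 2 then {[1]} else ∅

def instJ : Instance := fun R => if R = 0 then {[1]} else if R = 2 then {[1]} else ∅

/-- Applying the safe-scope procedures `P_T` then `P_R` to `I` can lose the
knowledge `R(x) → T(x)`: the instance `K`, which violates `R(x) → T(x)`, is a
possible outcome of the sequence `(P_T, P_R)` on `I`. -/
theorem knowledge_lost_by_scope :
    AcyclicTGDs GammaT ∧ AcyclicTGDs GammaR ∧
    instK ∈ safeSeqOutcomes [GammaT, GammaR] instI ∧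
    ¬ satTGD instK ⟨[atomR], [atomT]⟩ := by
  refine ⟨⟨fun R => if R = 2 then 1 else 0, ?_⟩,
          ⟨fun R => if R = 0 then 1 else 0, ?_⟩, ?_, ?_⟩
  · intro t ht a ha b hb
    simp only [GammaT, List.mem_cons, List.mem_singleton] at ht
    rcases ht with rfl | rfl | h
    · simp_all [atomR, atomT]
    · simp_all [atomS, atomT]
    · simp at h
  · intro t ht a ha b hb
    simp only [GammaR, List.mem_singleton] at ht
    subst ht
    simp_all [atomS, atomR]
  · -- membership
    have hJT : instJ ∈ safeOutcomes GammaT instI := by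
      refine ⟨?_, ?_, ?_⟩
      · intro R x hx
        simp only [instI] at hx
        by_cases h : R = 0 <;> simp_all [instJ]
      · intro t ht
        simp only [GammaT, List.mem_cons, List.mem_singleton] at ht
        rcases ht with rfl | rfl | h
        · intro ν hν
          have := hν atomR (by simp)
          simp only [holdsAtom, atomR, List.map, instJ] at this
          refine ⟨ν, fun v _ => rfl, ?_⟩
          intro a ha
          simp only [List.mem_singleton] at ha
          subst ha
          simpa [holdsAtom, atomT, instJ] using this
        · intro ν hν
          have := hν atomS (by simp)
          simp [holdsAtom, atomS, instJ] at this
        · simp at h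
      · intro R hR
        have hR2 : R ≠ 2 := by
          intro h; subst h
          exact hR ⟨⟨[atomR], [atomT]⟩, by simp [GammaT], atomT, by simp, rfl⟩
        by_cases h : R = 0 <;> simp_all [instI, instJ]
    have hKR : instK ∈ safeOutcomes GammaR instJ := by
      refine ⟨?_, ?_, ?_⟩
      · intro R x hx
        simp only [instJ] at hx
        by_cases h : R = 0
        · subst h
          have hx' : x = [1] := by simpa using hx
          simp [instK, hx']
        · by_cases h2 : R = 2 <;> simp_all [instK]
      · intro t ht
        simp only [GammaR, List.mem_singleton] at ht
        subst ht
        intro ν hν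
        have := hν atomS (by simp)
        simp [holdsAtom, atomS, instK] at this
      · intro R hR
        have hR0 : R ≠ 0 := by
          intro h; subst h
          exact hR ⟨⟨[atomS], [atomR]⟩, by simp [GammaR], atomR, by simp, rfl⟩
        by_cases h2 : R = 2 <;> simp_all [instK, instJ]
    simp only [safeSeqOutcomes, Set.mem_iUnion]
    exact ⟨instJ, hJT, by simp [safeSeqOutcomes, hKR]⟩
  · intro h
    obtain ⟨ν', hagree, hhead⟩ := h (fun _ => 2) (by
      intro a ha
      simp only [List.mem_singleton] at ha
      subst ha
      simp [holdsAtom, atomR, instK])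
    have hv : ν' 0 = 2 := hagree 0 ⟨atomR, by simp, by simp [atomR]⟩
    have := hhead atomT (by simp)
    simp [holdsAtom, atomT, instK, hv] at this
end

section
/- Nonemptiness of outcomes is undecidable: there exists a fixed procedure P with no preconditions and only tgd postconditions such that it is undecidable, given a finite instance I, whether outcomes_P(I) is nonempty. -/
/-- Encoding of finite instances as lists of facts (for computability). -/
abbrev FinInst := List (RelName × List Val)

/-- The instance encoded by a list of facts. -/
def toInstance (L : FinInst) : Instance := fun R => { t | (R, t) ∈ L }

/-- A conjunctive query with free variables. -/
structure CQuery where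
  free : List Var
  body : List Atom

/-- Answers of a conjunctive query over an instance. -/
def answers (q : CQuery) (I : Instance) : Set (List Val) :=
  { l | ∃ ν : Var → Val, (∀ a ∈ q.body, holdsAtom I ν a) ∧ l = q.free.map ν }

/-- A procedure whose pre- and postconditions are tgds, with a scope and
preservation queries. -/
structure Proc where
  scope : Set RelName
  pre : List TGD
  post : List TGD
  pres : List CQuery

/-- Possible outcomes of applying a procedure: the preconditions hold on `I`,
the postconditions hold on the outcome, out-of-scope relations are unchanged
and answers to the preservation queries are preserved. -/
def procOutcomes (P : Proc) (I : Instance) : Set Instance :=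
  { J | (∀ t ∈ P.pre, satTGD I t) ∧ (∀ t ∈ P.post, satTGD J t) ∧
        (∀ R, R ∉ P.scope → I R = J R) ∧ ∀ q ∈ P.pres, answers q I ⊆ answers q J }

/-!
We reduce from the halting problem for `Turing.ToPartrec.Code`. The input instance lists the
subterms of a code `c`, a chain `0, 1, …, n` of numbers, and the list `[n]`; the check relation
`Bad` is the only relation outside the scope. The postconditions form an interpreter: two
existential tgds provide successors of numbers and cons cells of lists, fifteen full tgds close
`Eval` under the defining equations of `Code.eval`, and one tgd derives `Bad` from
`Eval(c, [n], o)`. If `c` halts on `[n]`, every model of the tgds containing the input derives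
`Bad`, so there is no outcome; otherwise the intended model, whose `Eval` is the graph of
`Code.eval`, is one.
-/

open Turing.ToPartrec Encodable

section TGD

variable {I J : Instance}

theorem satTGD_iff_of_full {t : TGD} (ht : FullTGD t) :
    satTGD J t ↔ ∀ ν, (∀ a ∈ t.body, holdsAtom J ν a) → ∀ a ∈ t.head, holdsAtom J ν a := by
  refine ⟨fun h ν hb a ha => ?_, fun h ν hb => ⟨ν, fun _ _ => rfl, h ν hb⟩⟩
  obtain ⟨ν', hν', hhead⟩ := h ν hb
  rw [holdsAtom, ← List.map_congr_left fun v hv => hν' v (ht a ha v hv)]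
  exact hhead a ha

theorem satTGD_iff_of_fresh {t : TGD} (y : Var) (hy : ¬ t.bodyVar y)
    (ht : ∀ a ∈ t.head, ∀ v ∈ a.args, t.bodyVar v ∨ v = y) :
    satTGD J t ↔ ∀ ν, (∀ a ∈ t.body, holdsAtom J ν a) →
      ∃ b, ∀ a ∈ t.head, holdsAtom J (Function.update ν y b) a := by
  refine ⟨fun h ν hb => ?_, fun h ν hb => ?_⟩
  · obtain ⟨ν', hν', hhead⟩ := h ν hb
    refine ⟨ν' y, fun a ha => ?_⟩
    rw [holdsAtom, List.map_congr_left fun v hv => ?_]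
    · exact hhead a ha
    · rcases ht a ha v hv with hv | rfl
      · rw [Function.update_of_ne (by rintro rfl; exact hy hv), hν' v hv]
      · simp
  · obtain ⟨b, hb⟩ := h ν hb
    exact ⟨_, fun v hv => Function.update_of_ne (by rintro rfl; exact hy hv) _ _, hb⟩

instance (t : TGD) (v : Var) : Decidable (t.bodyVar v) := by
  unfold TGD.bodyVar; infer_instance

instance (t : TGD) : Decidable (FullTGD t) := by
  unfold FullTGD; infer_instance

theorem answers_mono {q : CQuery} (h : I.le J) : answers q I ⊆ answers q J := by
  rintro _ ⟨ν, hν, rfl⟩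
  exact ⟨ν, fun a ha => h _ (hν a ha), rfl⟩

def atomQuery (r : RelName) (k : ℕ) : CQuery := ⟨List.range k, [⟨r, List.range k⟩]⟩

theorem mem_of_answers_atomQuery_subset {r : RelName} {t : List Val}
    (h : answers (atomQuery r t.length) I ⊆ answers (atomQuery r t.length) J) (ht : t ∈ I r) :
    t ∈ J r := by
  have hν : (List.range t.length).map (t.getD · 0) = t :=
    List.ext_getElem (by simp) fun i _ hi => by simp [List.getElem?_eq_getElem hi]
  obtain ⟨ν, hbody, heq⟩ := h
    ⟨(t.getD · 0), by simpa only [atomQuery, holdsAtom, List.mem_singleton, forall_eq, hν], hν.symm⟩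
  rw [heq]
  exact hbody _ (List.mem_singleton_self _)

theorem toInstance_le_iff {L : FinInst} : (toInstance L).le J ↔ ∀ p ∈ L, p.2 ∈ J p.1 :=
  ⟨fun h p hp => h p.1 hp, fun h _ _ ht => h _ ht⟩

@[simp]
theorem toInstance_nil_le : (toInstance []).le J := fun _ _ h => absurd h List.not_mem_nil

@[simp]
theorem toInstance_cons_le {p : RelName × List Val} {L : FinInst} :
    (toInstance (p :: L)).le J ↔ p.2 ∈ J p.1 ∧ (toInstance L).le J := by
  simp [toInstance_le_iff]

@[simp]
theorem toInstance_append_le {L L' : FinInst} :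
    (toInstance (L ++ L')).le J ↔ (toInstance L).le J ∧ (toInstance L').le J := by
  simp [toInstance_le_iff, or_imp, forall_and]

@[simp]
theorem toInstance_map_le {α : Type*} {f : α → RelName × List Val} {L : List α} :
    (toInstance (L.map f)).le J ↔ ∀ a ∈ L, (f a).2 ∈ J (f a).1 := by
  simp [toInstance_le_iff]

end TGD

theorem Turing.ToPartrec.Code.exists_not_computablePred_eval_dom :
    ∃ c : Code, ¬ ComputablePred fun n : ℕ => (c.eval [n]).Dom := by
  let g : ℕ →. ℕ := fun n => (Denumerable.ofNat Nat.Partrec.Code n).eval 0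
  have hg : Nat.Partrec' fun v : List.Vector ℕ 1 => g v.head :=
    Nat.Partrec'.part_iff₁.2 <|
      Nat.Partrec.Code.eval_part.comp (Computable.ofNat _) (Computable.const 0)
  obtain ⟨c, hc⟩ := Code.exists_code hg
  -- `c` computes the universal function `n ↦ eval (ofNat n) 0`
  refine ⟨c, fun h => ComputablePred.halting_problem 0 ?_⟩
  refine ComputablePred.computable_of_manyOneReducible ⟨encode, Computable.encode, fun d => ?_⟩ h
  have hhead : List.Vector.head ⟨[encode d], rfl⟩ = encode d := rfl
  simp [hc ⟨[encode d], rfl⟩, g, hhead]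

namespace TGDInterpreter

def encCode : Code → ℕ
  | .zero' => Nat.pair 0 0
  | .succ => Nat.pair 1 0
  | .tail => Nat.pair 2 0
  | .cons f g => Nat.pair 3 (Nat.pair (encCode f) (encCode g))
  | .comp f g => Nat.pair 4 (Nat.pair (encCode f) (encCode g))
  | .case f g => Nat.pair 5 (Nat.pair (encCode f) (encCode g))
  | .fix f => Nat.pair 6 (encCode f)

theorem encCode_injective : Function.Injective encCode := by
  intro c
  induction c <;> intro d h <;> cases d <;>
    simp only [encCode, Nat.pair_eq_pair, reduceCtorEq, false_and, true_and] at h ⊢ <;> aesop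

abbrev rZero : RelName := 0
abbrev rSucc : RelName := 1
abbrev rNum : RelName := 2
abbrev rNil : RelName := 3
abbrev rList : RelName := 4
abbrev rCons : RelName := 5
abbrev rEval : RelName := 6
abbrev rBad : RelName := 7
abbrev rRoot : RelName := 8
abbrev rInput : RelName := 9
abbrev rCodeZero' : RelName := 10
abbrev rCodeSucc : RelName := 11
abbrev rCodeTail : RelName := 12
abbrev rCodeCons : RelName := 13
abbrev rCodeComp : RelName := 14
abbrev rCodeCase : RelName := 15
abbrev rCodeFix : RelName := 16

def numSucc : TGD := ⟨[⟨rNum, [0]⟩], [⟨rSucc, [0, 1]⟩, ⟨rNum, [1]⟩]⟩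
def listCons : TGD := ⟨[⟨rList, [0]⟩, ⟨rNum, [1]⟩], [⟨rCons, [2, 1, 0]⟩, ⟨rList, [2]⟩]⟩
def evalZero' : TGD := ⟨[⟨rCodeZero', [0]⟩, ⟨rCons, [3, 2, 1]⟩, ⟨rZero, [2]⟩], [⟨rEval, [0, 1, 3]⟩]⟩
def evalSuccCons : TGD :=
  ⟨[⟨rCodeSucc, [0]⟩, ⟨rCons, [1, 2, 3]⟩, ⟨rSucc, [2, 4]⟩, ⟨rNil, [5]⟩, ⟨rCons, [6, 4, 5]⟩],
    [⟨rEval, [0, 1, 6]⟩]⟩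
def evalSuccNil : TGD :=
  ⟨[⟨rCodeSucc, [0]⟩, ⟨rNil, [1]⟩, ⟨rZero, [2]⟩, ⟨rSucc, [2, 3]⟩, ⟨rCons, [4, 3, 1]⟩],
    [⟨rEval, [0, 1, 4]⟩]⟩
def evalTailCons : TGD := ⟨[⟨rCodeTail, [0]⟩, ⟨rCons, [1, 2, 3]⟩], [⟨rEval, [0, 1, 3]⟩]⟩
def evalTailNil : TGD := ⟨[⟨rCodeTail, [0]⟩, ⟨rNil, [1]⟩], [⟨rEval, [0, 1, 1]⟩]⟩
def evalConsCons : TGD :=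
  ⟨[⟨rCodeCons, [0, 1, 2]⟩, ⟨rEval, [1, 3, 4]⟩, ⟨rCons, [4, 5, 6]⟩, ⟨rEval, [2, 3, 7]⟩,
    ⟨rCons, [8, 5, 7]⟩], [⟨rEval, [0, 3, 8]⟩]⟩
def evalConsNil : TGD :=
  ⟨[⟨rCodeCons, [0, 1, 2]⟩, ⟨rEval, [1, 3, 4]⟩, ⟨rNil, [4]⟩, ⟨rZero, [5]⟩, ⟨rEval, [2, 3, 6]⟩,
    ⟨rCons, [7, 5, 6]⟩], [⟨rEval, [0, 3, 7]⟩]⟩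
def evalComp : TGD :=
  ⟨[⟨rCodeComp, [0, 1, 2]⟩, ⟨rEval, [2, 3, 4]⟩, ⟨rEval, [1, 4, 5]⟩], [⟨rEval, [0, 3, 5]⟩]⟩
def evalCaseNil : TGD :=
  ⟨[⟨rCodeCase, [0, 1, 2]⟩, ⟨rNil, [3]⟩, ⟨rEval, [1, 3, 4]⟩], [⟨rEval, [0, 3, 4]⟩]⟩
def evalCaseZero : TGD :=
  ⟨[⟨rCodeCase, [0, 1, 2]⟩, ⟨rCons, [3, 4, 5]⟩, ⟨rZero, [4]⟩, ⟨rEval, [1, 5, 6]⟩],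
    [⟨rEval, [0, 3, 6]⟩]⟩
def evalCaseSucc : TGD :=
  ⟨[⟨rCodeCase, [0, 1, 2]⟩, ⟨rCons, [3, 4, 5]⟩, ⟨rSucc, [6, 4]⟩, ⟨rCons, [7, 6, 5]⟩,
    ⟨rEval, [2, 7, 8]⟩], [⟨rEval, [0, 3, 8]⟩]⟩
def evalFixNil : TGD :=
  ⟨[⟨rCodeFix, [0, 1]⟩, ⟨rEval, [1, 2, 3]⟩, ⟨rNil, [3]⟩], [⟨rEval, [0, 2, 3]⟩]⟩
def evalFixZero : TGD :=
  ⟨[⟨rCodeFix, [0, 1]⟩, ⟨rEval, [1, 2, 3]⟩, ⟨rCons, [3, 4, 5]⟩, ⟨rZero, [4]⟩], [⟨rEval, [0, 2, 5]⟩]⟩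
def evalFixSucc : TGD :=
  ⟨[⟨rCodeFix, [0, 1]⟩, ⟨rEval, [1, 2, 3]⟩, ⟨rCons, [3, 4, 5]⟩, ⟨rSucc, [6, 4]⟩,
    ⟨rEval, [0, 5, 7]⟩], [⟨rEval, [0, 2, 7]⟩]⟩
def badOfHalt : TGD := ⟨[⟨rRoot, [0]⟩, ⟨rInput, [1]⟩, ⟨rEval, [0, 1, 2]⟩], [⟨rBad, []⟩]⟩

def rules : List TGD :=
  [numSucc, listCons, evalZero', evalSuccCons, evalSuccNil, evalTailCons, evalTailNil,
    evalConsCons, evalConsNil, evalComp, evalCaseNil, evalCaseZero, evalCaseSucc, evalFixNil,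
    evalFixZero, evalFixSucc, badOfHalt]

/-- The Horn-clause reading of `rules`, one field per tgd. -/
structure EvalClosed (J : Instance) : Prop where
  num_succ : ∀ x, [x] ∈ J rNum → ∃ y, [x, y] ∈ J rSucc ∧ [y] ∈ J rNum
  list_cons : ∀ l x, [l] ∈ J rList → [x] ∈ J rNum → ∃ m, [m, x, l] ∈ J rCons ∧ [m] ∈ J rList
  zero' : ∀ c l z o, [c] ∈ J rCodeZero' → [o, z, l] ∈ J rCons → [z] ∈ J rZero → [c, l, o] ∈ J rEval
  succ_cons : ∀ c l x t x' e o, [c] ∈ J rCodeSucc → [l, x, t] ∈ J rCons → [x, x'] ∈ J rSucc →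
    [e] ∈ J rNil → [o, x', e] ∈ J rCons → [c, l, o] ∈ J rEval
  succ_nil : ∀ c l z z' o, [c] ∈ J rCodeSucc → [l] ∈ J rNil → [z] ∈ J rZero → [z, z'] ∈ J rSucc →
    [o, z', l] ∈ J rCons → [c, l, o] ∈ J rEval
  tail_cons : ∀ c l x t, [c] ∈ J rCodeTail → [l, x, t] ∈ J rCons → [c, l, t] ∈ J rEval
  tail_nil : ∀ c l, [c] ∈ J rCodeTail → [l] ∈ J rNil → [c, l, l] ∈ J rEval
  cons_cons : ∀ c f g l m x t o' o, [c, f, g] ∈ J rCodeCons → [f, l, m] ∈ J rEval →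
    [m, x, t] ∈ J rCons → [g, l, o'] ∈ J rEval → [o, x, o'] ∈ J rCons → [c, l, o] ∈ J rEval
  cons_nil : ∀ c f g l m z o' o, [c, f, g] ∈ J rCodeCons → [f, l, m] ∈ J rEval → [m] ∈ J rNil →
    [z] ∈ J rZero → [g, l, o'] ∈ J rEval → [o, z, o'] ∈ J rCons → [c, l, o] ∈ J rEval
  comp : ∀ c f g l m o, [c, f, g] ∈ J rCodeComp → [g, l, m] ∈ J rEval → [f, m, o] ∈ J rEval →
    [c, l, o] ∈ J rEval
  case_nil : ∀ c f g l o, [c, f, g] ∈ J rCodeCase → [l] ∈ J rNil → [f, l, o] ∈ J rEval →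
    [c, l, o] ∈ J rEval
  case_zero : ∀ c f g l z t o, [c, f, g] ∈ J rCodeCase → [l, z, t] ∈ J rCons → [z] ∈ J rZero →
    [f, t, o] ∈ J rEval → [c, l, o] ∈ J rEval
  case_succ : ∀ c f g l x' t x m o, [c, f, g] ∈ J rCodeCase → [l, x', t] ∈ J rCons →
    [x, x'] ∈ J rSucc → [m, x, t] ∈ J rCons → [g, m, o] ∈ J rEval → [c, l, o] ∈ J rEval
  fix_nil : ∀ c f l m, [c, f] ∈ J rCodeFix → [f, l, m] ∈ J rEval → [m] ∈ J rNil →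
    [c, l, m] ∈ J rEval
  fix_zero : ∀ c f l m z t, [c, f] ∈ J rCodeFix → [f, l, m] ∈ J rEval → [m, z, t] ∈ J rCons →
    [z] ∈ J rZero → [c, l, t] ∈ J rEval
  fix_succ : ∀ c f l m x' t x o, [c, f] ∈ J rCodeFix → [f, l, m] ∈ J rEval → [m, x', t] ∈ J rCons →
    [x, x'] ∈ J rSucc → [c, t, o] ∈ J rEval → [c, l, o] ∈ J rEval
  bad : ∀ c l o, [c] ∈ J rRoot → [l] ∈ J rInput → [c, l, o] ∈ J rEval → [] ∈ J rBad

variable {J : Instance}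

theorem EvalClosed.of_satTGD_rules (h : ∀ t ∈ rules, satTGD J t) : EvalClosed J := by
  simp only [rules, List.forall_mem_cons, List.not_mem_nil, IsEmpty.forall_iff, implies_true,
    and_true] at h
  rw [satTGD_iff_of_fresh 1 (by decide) (by decide),
    satTGD_iff_of_fresh 2 (by decide) (by decide)] at h
  simp (disch := decide) only [satTGD_iff_of_full] at h
  simp only [numSucc, listCons, evalZero', evalSuccCons, evalSuccNil, evalTailCons, evalTailNil,
    evalConsCons, evalConsNil, evalComp, evalCaseNil, evalCaseZero, evalCaseSucc, evalFixNil,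
    evalFixZero, evalFixSucc, badOfHalt, holdsAtom, List.forall_mem_cons, List.not_mem_nil,
    IsEmpty.forall_iff, implies_true, and_true, List.map_cons, List.map_nil,
    Function.update_self, Function.update_apply, zero_ne_one, ↓reduceIte] at h
  obtain ⟨num, list, zero', succCons, succNil, tailCons, tailNil, consCons, consNil, comp,
    caseNil, caseZero, caseSucc, fixNil, fixZero, fixSucc, bad⟩ := h
  exact
    { num_succ := fun x => num fun _ => x
      list_cons := fun l x hl hx => list (fun i => [l, x].getD i 0) ⟨hl, hx⟩
      zero' := fun c l z o h₁ h₂ h₃ => zero' (fun i => [c, l, z, o].getD i 0) ⟨h₁, h₂, h₃⟩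
      succ_cons := fun c l x t x' e o h₁ h₂ h₃ h₄ h₅ =>
        succCons (fun i => [c, l, x, t, x', e, o].getD i 0) ⟨h₁, h₂, h₃, h₄, h₅⟩
      succ_nil := fun c l z z' o h₁ h₂ h₃ h₄ h₅ =>
        succNil (fun i => [c, l, z, z', o].getD i 0) ⟨h₁, h₂, h₃, h₄, h₅⟩
      tail_cons := fun c l x t h₁ h₂ => tailCons (fun i => [c, l, x, t].getD i 0) ⟨h₁, h₂⟩
      tail_nil := fun c l h₁ h₂ => tailNil (fun i => [c, l].getD i 0) ⟨h₁, h₂⟩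
      cons_cons := fun c f g l m x t o' o h₁ h₂ h₃ h₄ h₅ =>
        consCons (fun i => [c, f, g, l, m, x, t, o', o].getD i 0) ⟨h₁, h₂, h₃, h₄, h₅⟩
      cons_nil := fun c f g l m z o' o h₁ h₂ h₃ h₄ h₅ h₆ =>
        consNil (fun i => [c, f, g, l, m, z, o', o].getD i 0) ⟨h₁, h₂, h₃, h₄, h₅, h₆⟩
      comp := fun c f g l m o h₁ h₂ h₃ => comp (fun i => [c, f, g, l, m, o].getD i 0) ⟨h₁, h₂, h₃⟩
      case_nil := fun c f g l o h₁ h₂ h₃ =>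
        caseNil (fun i => [c, f, g, l, o].getD i 0) ⟨h₁, h₂, h₃⟩
      case_zero := fun c f g l z t o h₁ h₂ h₃ h₄ =>
        caseZero (fun i => [c, f, g, l, z, t, o].getD i 0) ⟨h₁, h₂, h₃, h₄⟩
      case_succ := fun c f g l x' t x m o h₁ h₂ h₃ h₄ h₅ =>
        caseSucc (fun i => [c, f, g, l, x', t, x, m, o].getD i 0) ⟨h₁, h₂, h₃, h₄, h₅⟩
      fix_nil := fun c f l m h₁ h₂ h₃ => fixNil (fun i => [c, f, l, m].getD i 0) ⟨h₁, h₂, h₃⟩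
      fix_zero := fun c f l m z t h₁ h₂ h₃ h₄ =>
        fixZero (fun i => [c, f, l, m, z, t].getD i 0) ⟨h₁, h₂, h₃, h₄⟩
      fix_succ := fun c f l m x' t x o h₁ h₂ h₃ h₄ h₅ =>
        fixSucc (fun i => [c, f, l, m, x', t, x, o].getD i 0) ⟨h₁, h₂, h₃, h₄, h₅⟩
      bad := fun c l o h₁ h₂ h₃ => bad (fun i => [c, l, o].getD i 0) ⟨h₁, h₂, h₃⟩ }

theorem EvalClosed.satTGD_rules (h : EvalClosed J) : ∀ t ∈ rules, satTGD J t := by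
  simp only [rules, List.forall_mem_cons, List.not_mem_nil, IsEmpty.forall_iff, implies_true,
    and_true]
  rw [satTGD_iff_of_fresh 1 (by decide) (by decide),
    satTGD_iff_of_fresh 2 (by decide) (by decide)]
  simp (disch := decide) only [satTGD_iff_of_full]
  simp only [numSucc, listCons, evalZero', evalSuccCons, evalSuccNil, evalTailCons, evalTailNil,
    evalConsCons, evalConsNil, evalComp, evalCaseNil, evalCaseZero, evalCaseSucc, evalFixNil,
    evalFixZero, evalFixSucc, badOfHalt, holdsAtom, List.forall_mem_cons, List.not_mem_nil,
    IsEmpty.forall_iff, implies_true, and_true, List.map_cons, List.map_nil,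
    Function.update_self, Function.update_apply, zero_ne_one, ↓reduceIte]
  exact ⟨fun ν => h.num_succ _, fun ν ⟨h₁, h₂⟩ => h.list_cons _ _ h₁ h₂,
    fun ν ⟨h₁, h₂, h₃⟩ => h.zero' _ _ _ _ h₁ h₂ h₃,
    fun ν ⟨h₁, h₂, h₃, h₄, h₅⟩ => h.succ_cons _ _ _ _ _ _ _ h₁ h₂ h₃ h₄ h₅,
    fun ν ⟨h₁, h₂, h₃, h₄, h₅⟩ => h.succ_nil _ _ _ _ _ h₁ h₂ h₃ h₄ h₅,
    fun ν ⟨h₁, h₂⟩ => h.tail_cons _ _ _ _ h₁ h₂, fun ν ⟨h₁, h₂⟩ => h.tail_nil _ _ h₁ h₂,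
    fun ν ⟨h₁, h₂, h₃, h₄, h₅⟩ => h.cons_cons _ _ _ _ _ _ _ _ _ h₁ h₂ h₃ h₄ h₅,
    fun ν ⟨h₁, h₂, h₃, h₄, h₅, h₆⟩ => h.cons_nil _ _ _ _ _ _ _ _ h₁ h₂ h₃ h₄ h₅ h₆,
    fun ν ⟨h₁, h₂, h₃⟩ => h.comp _ _ _ _ _ _ h₁ h₂ h₃,
    fun ν ⟨h₁, h₂, h₃⟩ => h.case_nil _ _ _ _ _ h₁ h₂ h₃,
    fun ν ⟨h₁, h₂, h₃, h₄⟩ => h.case_zero _ _ _ _ _ _ _ h₁ h₂ h₃ h₄,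
    fun ν ⟨h₁, h₂, h₃, h₄, h₅⟩ => h.case_succ _ _ _ _ _ _ _ _ _ h₁ h₂ h₃ h₄ h₅,
    fun ν ⟨h₁, h₂, h₃⟩ => h.fix_nil _ _ _ _ h₁ h₂ h₃,
    fun ν ⟨h₁, h₂, h₃, h₄⟩ => h.fix_zero _ _ _ _ _ _ h₁ h₂ h₃ h₄,
    fun ν ⟨h₁, h₂, h₃, h₄, h₅⟩ => h.fix_succ _ _ _ _ _ _ _ _ h₁ h₂ h₃ h₄ h₅,
    fun ν ⟨h₁, h₂, h₃⟩ => h.bad _ _ _ h₁ h₂ h₃⟩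

/-- Outcomes are arbitrary instances, so numbers and lists are represented by whatever values the
`Zero`/`Succ` and `Nil`/`Cons` facts link, not by fixed encodings. -/
def RepNat (J : Instance) : Val → ℕ → Prop
  | x, 0 => [x] ∈ J rZero ∧ [x] ∈ J rNum
  | x, k + 1 => [x] ∈ J rNum ∧ ∃ y, RepNat J y k ∧ [y, x] ∈ J rSucc

def RepList (J : Instance) : Val → List ℕ → Prop
  | l, [] => [l] ∈ J rNil ∧ [l] ∈ J rList
  | l, a :: v => [l] ∈ J rList ∧ ∃ x t, RepNat J x a ∧ RepList J t v ∧ [l, x, t] ∈ J rCons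

theorem RepNat.num {x : Val} {k : ℕ} (h : RepNat J x k) : [x] ∈ J rNum := by
  cases k with
  | zero => exact h.2
  | succ k => exact h.1

theorem RepList.list {l : Val} {v : List ℕ} (h : RepList J l v) : [l] ∈ J rList := by
  cases v with
  | nil => exact h.2
  | cons a v => exact h.1

theorem repNat_of_chain {n : ℕ} (hz : [0] ∈ J rZero) (hnum : ∀ k ≤ n, [k] ∈ J rNum)
    (hS : ∀ k < n, [k, k + 1] ∈ J rSucc) : ∀ k ≤ n, RepNat J k k
  | 0, _ => ⟨hz, hnum 0 (Nat.zero_le n)⟩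
  | k + 1, hk => ⟨hnum _ hk, k, repNat_of_chain hz hnum hS k (by omega), hS k hk⟩

theorem EvalClosed.exists_repNat_succ (hJ : EvalClosed J) {x : Val} {k : ℕ}
    (hx : RepNat J x k) : ∃ y, RepNat J y (k + 1) ∧ [x, y] ∈ J rSucc := by
  obtain ⟨y, hS, hy⟩ := hJ.num_succ x hx.num
  exact ⟨y, ⟨hy, x, hx, hS⟩, hS⟩

theorem EvalClosed.exists_repList_cons (hJ : EvalClosed J) {l x : Val} {v : List ℕ} {a : ℕ}
    (hl : RepList J l v) (hx : RepNat J x a) : ∃ m, RepList J m (a :: v) ∧ [m, x, l] ∈ J rCons := by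
  obtain ⟨m, hC, hm⟩ := hJ.list_cons l x hl.list hx.num
  exact ⟨m, ⟨hm, x, l, hx, hl, hC⟩, hC⟩

def Computes (J : Instance) (c : Code) : Prop :=
  ∀ v w l, w ∈ c.eval v → RepList J l v → ∃ o, RepList J o w ∧ [encCode c, l, o] ∈ J rEval

theorem EvalClosed.computes_zero' (hJ : EvalClosed J) {z : Val} (hz : RepNat J z 0)
    (hc : [encCode .zero'] ∈ J rCodeZero') : Computes J .zero' := by
  intro v w l hw hl
  obtain rfl : w = 0 :: v := by simpa using hw
  obtain ⟨o, ho, hC⟩ := hJ.exists_repList_cons hl hz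
  exact ⟨o, ho, hJ.zero' _ _ _ _ hc hC hz.1⟩

theorem EvalClosed.computes_succ (hJ : EvalClosed J) {z e : Val} (hz : RepNat J z 0)
    (he : RepList J e []) (hc : [encCode .succ] ∈ J rCodeSucc) : Computes J .succ := by
  intro v w l hw hl
  obtain rfl : w = [v.headI + 1] := by simpa using hw
  rcases v with _ | ⟨a, v⟩
  · obtain ⟨x, hx, hS⟩ := hJ.exists_repNat_succ hz
    obtain ⟨o, ho, hC⟩ := hJ.exists_repList_cons hl hx
    exact ⟨o, ho, hJ.succ_nil _ _ _ _ _ hc hl.1 hz.1 hS hC⟩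
  · obtain ⟨x, t, hx, -, hC⟩ := hl.2
    obtain ⟨x', hx', hS⟩ := hJ.exists_repNat_succ hx
    obtain ⟨o, ho, hC'⟩ := hJ.exists_repList_cons he hx'
    exact ⟨o, ho, hJ.succ_cons _ _ _ _ _ _ _ hc hC hS he.1 hC'⟩

theorem EvalClosed.computes_tail (hJ : EvalClosed J) (hc : [encCode .tail] ∈ J rCodeTail) :
    Computes J .tail := by
  intro v w l hw hl
  obtain rfl : w = v.tail := by simpa using hw
  rcases v with _ | ⟨a, v⟩
  · exact ⟨l, hl, hJ.tail_nil _ _ hc hl.1⟩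
  · obtain ⟨x, t, -, ht, hC⟩ := hl.2
    exact ⟨t, ht, hJ.tail_cons _ _ _ _ hc hC⟩

theorem EvalClosed.computes_cons (hJ : EvalClosed J) {z : Val} (hz : RepNat J z 0)
    {f g : Code} (hc : [encCode (.cons f g), encCode f, encCode g] ∈ J rCodeCons)
    (hf : Computes J f) (hg : Computes J g) : Computes J (.cons f g) := by
  intro v w l hw hl
  simp only [Code.cons_eval, Part.bind_eq_bind, Part.mem_bind_iff, Part.pure_eq_some,
    Part.mem_some_iff] at hw
  obtain ⟨m, hm, w', hw', rfl⟩ := hw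
  obtain ⟨o₁, ho₁, hE₁⟩ := hf v m l hm hl
  obtain ⟨o₂, ho₂, hE₂⟩ := hg v w' l hw' hl
  rcases m with _ | ⟨a, m⟩
  · obtain ⟨o, ho, hC⟩ := hJ.exists_repList_cons ho₂ hz
    exact ⟨o, ho, hJ.cons_nil _ _ _ _ _ _ _ _ hc hE₁ ho₁.1 hz.1 hE₂ hC⟩
  · obtain ⟨x, t, hx, -, hC₁⟩ := ho₁.2
    obtain ⟨o, ho, hC⟩ := hJ.exists_repList_cons ho₂ hx
    exact ⟨o, ho, hJ.cons_cons _ _ _ _ _ _ _ _ _ hc hE₁ hC₁ hE₂ hC⟩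

theorem EvalClosed.computes_comp (hJ : EvalClosed J) {f g : Code}
    (hc : [encCode (.comp f g), encCode f, encCode g] ∈ J rCodeComp) (hf : Computes J f)
    (hg : Computes J g) : Computes J (.comp f g) := by
  intro v w l hw hl
  obtain ⟨m, hm, hw⟩ := Part.mem_bind_iff.1 (Code.comp_eval f g ▸ hw)
  obtain ⟨o₁, ho₁, hE₁⟩ := hg v m l hm hl
  obtain ⟨o, ho, hE⟩ := hf m w o₁ hw ho₁
  exact ⟨o, ho, hJ.comp _ _ _ _ _ _ hc hE₁ hE⟩

theorem EvalClosed.computes_case (hJ : EvalClosed J) {f g : Code}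
    (hc : [encCode (.case f g), encCode f, encCode g] ∈ J rCodeCase) (hf : Computes J f)
    (hg : Computes J g) : Computes J (.case f g) := by
  intro v w l hw hl
  rw [Code.case_eval] at hw
  rcases v with _ | ⟨_ | a, v⟩
  · obtain ⟨o, ho, hE⟩ := hf [] w l (by simpa using hw) hl
    exact ⟨o, ho, hJ.case_nil _ _ _ _ _ hc hl.1 hE⟩
  · obtain ⟨x, t, hx, ht, hC⟩ := hl.2
    obtain ⟨o, ho, hE⟩ := hf v w t (by simpa using hw) ht
    exact ⟨o, ho, hJ.case_zero _ _ _ _ _ _ _ hc hC hx.1 hE⟩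
  · obtain ⟨x', t, hx', ht, hC⟩ := hl.2
    obtain ⟨x, hx, hS⟩ := hx'.2
    obtain ⟨m, hm, hC'⟩ := hJ.exists_repList_cons ht hx
    obtain ⟨o, ho, hE⟩ := hg (a :: v) w m (by simpa using hw) hm
    exact ⟨o, ho, hJ.case_succ _ _ _ _ _ _ _ _ _ hc hC hS hC' hE⟩

theorem EvalClosed.computes_fix (hJ : EvalClosed J) {f : Code}
    (hc : [encCode (.fix f), encCode f] ∈ J rCodeFix) (hf : Computes J f) :
    Computes J (.fix f) := by
  intro v w l hw hl
  rw [Code.fix_eval] at hw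
  refine PFun.fixInduction' (C := fun v => ∀ l, RepList J l v →
    ∃ o, RepList J o w ∧ [encCode (.fix f), l, o] ∈ J rEval) hw ?_ ?_ l hl
  · intro v hstop l hl
    obtain ⟨m, hm, hmw⟩ := Part.mem_map_iff _ |>.1 hstop
    obtain ⟨o, ho, hE⟩ := hf v m l hm hl
    rcases m with _ | ⟨_ | b, t⟩
    · obtain rfl : w = [] := by simpa using hmw
      exact ⟨o, ho, hJ.fix_nil _ _ _ _ hc hE ho.1⟩
    · obtain rfl : t = w := by simpa using hmw
      obtain ⟨x, t', hx, ht', hC⟩ := ho.2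
      exact ⟨t', ht', hJ.fix_zero _ _ _ _ _ _ hc hE hC hx.1⟩
    · simp at hmw
  · intro v v' _ hstep IH l hl
    obtain ⟨m, hm, hmv⟩ := Part.mem_map_iff _ |>.1 hstep
    obtain ⟨o₁, ho₁, hE₁⟩ := hf v m l hm hl
    rcases m with _ | ⟨_ | b, t⟩
    · simp at hmv
    · simp at hmv
    · obtain rfl : t = v' := by simpa using hmv
      obtain ⟨x', t', hx', ht', hC⟩ := ho₁.2
      obtain ⟨x, -, hS⟩ := hx'.2
      obtain ⟨o, ho, hE⟩ := IH t' ht'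
      exact ⟨o, ho, hJ.fix_succ _ _ _ _ _ _ _ _ hc hE₁ hC hS hE⟩

def codeFacts : Code → FinInst
  | .zero' => [(rCodeZero', [encCode .zero'])]
  | .succ => [(rCodeSucc, [encCode .succ])]
  | .tail => [(rCodeTail, [encCode .tail])]
  | .cons f g =>
    (rCodeCons, [encCode (.cons f g), encCode f, encCode g]) :: (codeFacts f ++ codeFacts g)
  | .comp f g =>
    (rCodeComp, [encCode (.comp f g), encCode f, encCode g]) :: (codeFacts f ++ codeFacts g)
  | .case f g =>
    (rCodeCase, [encCode (.case f g), encCode f, encCode g]) :: (codeFacts f ++ codeFacts g)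
  | .fix f => (rCodeFix, [encCode (.fix f), encCode f]) :: codeFacts f

theorem EvalClosed.computes (hJ : EvalClosed J) {z e : Val} (hz : RepNat J z 0)
    (he : RepList J e []) {c : Code} (hc : (toInstance (codeFacts c)).le J) : Computes J c := by
  induction c with
  | zero' => exact hJ.computes_zero' hz (by simpa [codeFacts] using hc)
  | succ => exact hJ.computes_succ hz he (by simpa [codeFacts] using hc)
  | tail => exact hJ.computes_tail (by simpa [codeFacts] using hc)
  | cons f g ihf ihg =>
    simp only [codeFacts, toInstance_cons_le, toInstance_append_le] at hc
    exact hJ.computes_cons hz hc.1 (ihf hc.2.1) (ihg hc.2.2)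
  | comp f g ihf ihg =>
    simp only [codeFacts, toInstance_cons_le, toInstance_append_le] at hc
    exact hJ.computes_comp hc.1 (ihf hc.2.1) (ihg hc.2.2)
  | case f g ihf ihg =>
    simp only [codeFacts, toInstance_cons_le, toInstance_append_le] at hc
    exact hJ.computes_case hc.1 (ihf hc.2.1) (ihg hc.2.2)
  | fix f ihf =>
    simp only [codeFacts, toInstance_cons_le] at hc
    exact hJ.computes_fix hc.1 (ihf hc.2)

def inputFacts (n : ℕ) : FinInst :=
  [(rZero, [0]), (rNil, [encode ([] : List ℕ)]), (rList, [encode ([] : List ℕ)]),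
      (rList, [encode [n]]), (rCons, [encode [n], n, encode ([] : List ℕ)]),
      (rInput, [encode [n]])] ++
    (List.range (n + 1)).map (fun k => (rNum, [k])) ++
    (List.range n).map (fun k => (rSucc, [k, k + 1]))

def instFacts (c : Code) (n : ℕ) : FinInst :=
  (rRoot, [encCode c]) :: (codeFacts c ++ inputFacts n)

theorem EvalClosed.bad_of_dom {c₀ : Code} {n : ℕ} (hJ : EvalClosed J)
    (hI : (toInstance (instFacts c₀ n)).le J) (hdom : (c₀.eval [n]).Dom) : [] ∈ J rBad := by
  simp only [instFacts, inputFacts, toInstance_cons_le, toInstance_append_le, toInstance_map_le,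
    toInstance_nil_le, and_true, List.mem_range] at hI
  obtain ⟨hroot, hcode, ⟨⟨hzero, hnil, hlnil, hln, hcons, hinput⟩, hnum⟩, hS⟩ := hI
  have hz : RepNat J 0 0 := ⟨hzero, hnum 0 (by omega)⟩
  have he : RepList J (encode ([] : List ℕ)) [] := ⟨hnil, hlnil⟩
  have hn : RepList J (encode [n]) [n] :=
    ⟨hln, n, _, repNat_of_chain hzero (fun k hk => hnum k (by omega)) hS n le_rfl, he, hcons⟩
  obtain ⟨w, hw⟩ := Part.dom_iff_mem.1 hdom
  obtain ⟨o, -, hE⟩ := hJ.computes hz he hcode [n] w _ hw hn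
  exact hJ.bad _ _ _ hroot hinput hE

/-- The intended model, relation `k` being the `k`-th name above. Numbers stand for themselves,
lists and codes for their encodings; the encodings may overlap since every rule is well sorted. -/
def canonical (c₀ : Code) (n : ℕ) : Instance
  | 0 => {[0]}
  | 1 => {t | ∃ k, t = [k, k + 1]}
  | 2 => {t | ∃ k, t = [k]}
  | 3 => {[encode ([] : List ℕ)]}
  | 4 => {t | ∃ v : List ℕ, t = [encode v]}
  | 5 => {t | ∃ (a : ℕ) (v : List ℕ), t = [encode (a :: v), a, encode v]}
  | 6 => {t | ∃ c v w, w ∈ c.eval v ∧ t = [encCode c, encode v, encode w]}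
  | 8 => {[encCode c₀]}
  | 9 => {[encode [n]]}
  | 10 => {[encCode .zero']}
  | 11 => {[encCode .succ]}
  | 12 => {[encCode .tail]}
  | 13 => {t | ∃ f g, t = [encCode (.cons f g), encCode f, encCode g]}
  | 14 => {t | ∃ f g, t = [encCode (.comp f g), encCode f, encCode g]}
  | 15 => {t | ∃ f g, t = [encCode (.case f g), encCode f, encCode g]}
  | 16 => {t | ∃ f, t = [encCode (.fix f), encCode f]}
  | _ => ∅

section Canonical

variable {c₀ : Code} {n : ℕ}

theorem canonical_bad : canonical c₀ n rBad = ∅ := rfl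

theorem lt_and_length_lt_of_mem_canonical {R : RelName} {t : List Val}
    (h : t ∈ canonical c₀ n R) : R < 17 ∧ t.length < 4 := by
  unfold canonical at h
  split at h <;> simp at h <;> aesop

theorem codeFacts_le_canonical (c : Code) : (toInstance (codeFacts c)).le (canonical c₀ n) := by
  induction c <;> simp_all [codeFacts, canonical, encCode_injective.eq_iff]

theorem instFacts_le_canonical : (toInstance (instFacts c₀ n)).le (canonical c₀ n) := by
  simp only [instFacts, inputFacts, toInstance_cons_le, toInstance_append_le, toInstance_map_le,
    toInstance_nil_le, codeFacts_le_canonical, List.mem_range]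
  exact ⟨rfl, trivial, ⟨⟨rfl, rfl, ⟨[], rfl⟩, ⟨[n], rfl⟩, ⟨n, [], rfl⟩, rfl, trivial⟩,
    fun k _ => ⟨k, rfl⟩⟩, fun k _ => ⟨k, rfl⟩⟩

theorem toInstance_instFacts_bad : toInstance (instFacts c₀ n) rBad = ∅ :=
  Set.subset_empty_iff.1 (canonical_bad (c₀ := c₀) (n := n) ▸ instFacts_le_canonical rBad)

theorem evalClosed_canonical (h : ¬ (c₀.eval [n]).Dom) : EvalClosed (canonical c₀ n) := by
  constructor <;> simp only [canonical, Set.mem_ofPred_eq, Set.mem_singleton_iff,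
    Set.mem_empty_iff_false, List.cons.injEq, and_true]
  case num_succ =>
    rintro x ⟨_, rfl⟩
    exact ⟨x + 1, ⟨x, rfl, rfl⟩, _, rfl⟩
  case list_cons =>
    rintro _ x ⟨v, rfl⟩ ⟨_, rfl⟩
    exact ⟨_, ⟨x, v, rfl, rfl, rfl⟩, _, rfl⟩
  case zero' =>
    rintro _ _ _ _ rfl ⟨_, v, rfl, rfl, rfl⟩ rfl
    exact ⟨_, v, _, by simp [Code.zero'_eval], rfl, rfl, rfl⟩
  case succ_cons =>
    rintro _ _ x _ _ _ _ rfl ⟨_, v, rfl, rfl, rfl⟩ ⟨_, rfl, rfl⟩ rfl ⟨_, _, rfl, rfl, he⟩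
    cases encode_injective he
    exact ⟨_, x :: v, _, by simp [Code.succ_eval], rfl, rfl, rfl⟩
  case succ_nil =>
    rintro _ _ _ _ _ rfl rfl rfl ⟨_, rfl, rfl⟩ ⟨_, _, rfl, rfl, he⟩
    cases encode_injective he
    exact ⟨_, [], _, by simp [Code.succ_eval], rfl, rfl, rfl⟩
  case tail_cons =>
    rintro _ _ x _ rfl ⟨_, v, rfl, rfl, rfl⟩
    exact ⟨_, x :: v, _, by simp [Code.tail_eval], rfl, rfl, rfl⟩
  case tail_nil =>
    rintro _ _ rfl rfl
    exact ⟨_, [], _, by simp [Code.tail_eval], rfl, rfl, rfl⟩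
  case comp =>
    rintro _ _ _ _ _ _ ⟨f, g, rfl, rfl, rfl⟩ ⟨_, v, m, hm, hg, rfl, rfl⟩ ⟨_, _, w, hw, hf, hm', rfl⟩
    cases encCode_injective hg; cases encCode_injective hf; cases encode_injective hm'
    exact ⟨_, v, w, by rw [Code.comp_eval]; exact Part.mem_bind_iff.2 ⟨m, hm, hw⟩, rfl, rfl, rfl⟩
  case cons_cons =>
    rintro _ _ _ _ _ x _ _ _ ⟨f, g, rfl, rfl, rfl⟩ ⟨_, v, m, hm, hf, rfl, rfl⟩ ⟨_, t, hmt, rfl, rfl⟩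
      ⟨_, _, w, hw, hg, hv, rfl⟩ ⟨_, w', rfl, rfl, hw'⟩
    cases encCode_injective hf; cases encCode_injective hg; cases encode_injective hmt
    cases encode_injective hv; cases encode_injective hw'
    refine ⟨_, v, x :: w, ?_, rfl, rfl, rfl⟩
    simp only [Code.cons_eval, Part.bind_eq_bind, Part.mem_bind_iff, Part.pure_eq_some,
      Part.mem_some_iff]
    exact ⟨_, hm, _, hw, rfl⟩
  case cons_nil =>
    rintro _ _ _ _ _ _ _ _ ⟨f, g, rfl, rfl, rfl⟩ ⟨_, v, m, hm, hf, rfl, rfl⟩ hnil rfl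
      ⟨_, _, w, hw, hg, hv, rfl⟩ ⟨_, w', rfl, rfl, hw'⟩
    cases encCode_injective hf; cases encCode_injective hg; cases encode_injective hnil
    cases encode_injective hv; cases encode_injective hw'
    refine ⟨_, v, 0 :: w, ?_, rfl, rfl, rfl⟩
    simp only [Code.cons_eval, Part.bind_eq_bind, Part.mem_bind_iff, Part.pure_eq_some,
      Part.mem_some_iff]
    exact ⟨_, hm, _, hw, rfl⟩
  case case_nil =>
    rintro _ _ _ _ _ ⟨f, g, rfl, rfl, rfl⟩ rfl ⟨_, v, w, hw, hf, hv, rfl⟩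
    cases encCode_injective hf; cases encode_injective hv
    exact ⟨_, [], w, by rw [Code.case_eval]; simpa using hw, rfl, rfl, rfl⟩
  case case_zero =>
    rintro _ _ _ _ _ _ _ ⟨f, g, rfl, rfl, rfl⟩ ⟨_, v, rfl, rfl, rfl⟩ rfl ⟨_, _, w, hw, hf, hv, rfl⟩
    cases encCode_injective hf; cases encode_injective hv
    exact ⟨_, 0 :: v, w, by rw [Code.case_eval]; simpa using hw, rfl, rfl, rfl⟩
  case case_succ =>
    rintro _ _ _ _ _ _ x _ _ ⟨f, g, rfl, rfl, rfl⟩ ⟨_, v, rfl, rfl, rfl⟩ ⟨_, rfl, rfl⟩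
      ⟨_, _, rfl, rfl, hv⟩ ⟨_, _, w, hw, hg, hm, rfl⟩
    cases encCode_injective hg; cases encode_injective hv; cases encode_injective hm
    exact ⟨_, (x + 1) :: v, w, by rw [Code.case_eval]; simpa using hw, rfl, rfl, rfl⟩
  case fix_nil =>
    rintro _ _ _ _ ⟨f, rfl, rfl⟩ ⟨_, v, m, hm, hf, rfl, rfl⟩ hnil
    cases encCode_injective hf; cases encode_injective hnil
    refine ⟨_, v, [], ?_, rfl, rfl, rfl⟩
    rw [Code.fix_eval]
    exact PFun.fix_stop (Part.mem_map_iff _ |>.2 ⟨[], hm, rfl⟩)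
  case fix_zero =>
    rintro _ _ _ _ _ _ ⟨f, rfl, rfl⟩ ⟨_, v, m, hm, hf, rfl, rfl⟩ ⟨_, t, hmt, rfl, rfl⟩ rfl
    cases encCode_injective hf; cases encode_injective hmt
    refine ⟨_, v, t, ?_, rfl, rfl, rfl⟩
    rw [Code.fix_eval]
    exact PFun.fix_stop (Part.mem_map_iff _ |>.2 ⟨_, hm, rfl⟩)
  case fix_succ =>
    rintro _ _ _ _ _ _ _ _ ⟨f, rfl, rfl⟩ ⟨_, v, m, hm, hf, rfl, rfl⟩ ⟨_, t, hmt, rfl, rfl⟩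
      ⟨_, rfl, rfl⟩
      ⟨_, _, w, hw, hc, ht, rfl⟩
    cases encCode_injective hf; cases encCode_injective hc; cases encode_injective hmt
    cases encode_injective ht
    refine ⟨_, v, w, ?_, rfl, rfl, rfl⟩
    rw [Code.fix_eval] at hw ⊢
    exact PFun.mem_fix_iff.2 (.inr ⟨_, Part.mem_map_iff _ |>.2 ⟨_, hm, rfl⟩, hw⟩)
  case bad =>
    rintro _ _ _ rfl rfl ⟨_, _, w, hw, hc, hl, rfl⟩
    cases encCode_injective hc; cases encode_injective hl
    exact h (Part.dom_iff_mem.2 ⟨w, hw⟩)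


end Canonical

/-- Every input fact has one of the 17 relations and arity at most 3. -/
def presQueries : List CQuery :=
  (List.range 17).flatMap fun R => (List.range 4).map (atomQuery R)

def interpreterProc : Proc := ⟨{rBad}ᶜ, [], rules, presQueries⟩

variable {c₀ : Code} {n : ℕ}

theorem instFacts_le_of_mem_procOutcomes
    (hJ : J ∈ procOutcomes interpreterProc (toInstance (instFacts c₀ n))) :
    (toInstance (instFacts c₀ n)).le J := by
  intro R t ht
  obtain ⟨hR, hlen⟩ := lt_and_length_lt_of_mem_canonical (instFacts_le_canonical R ht)
  refine mem_of_answers_atomQuery_subset (hJ.2.2.2 _ ?_) ht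
  simpa [interpreterProc, presQueries] using ⟨R, hR, t.length, hlen, rfl⟩

theorem procOutcomes_nonempty_iff :
    (procOutcomes interpreterProc (toInstance (instFacts c₀ n))).Nonempty ↔
      ¬ (c₀.eval [n]).Dom := by
  constructor
  · rintro ⟨J, hJ⟩ hdom
    have hbad := (EvalClosed.of_satTGD_rules hJ.2.1).bad_of_dom
      (instFacts_le_of_mem_procOutcomes hJ) hdom
    rwa [← hJ.2.2.1 rBad (by simp [interpreterProc]), toInstance_instFacts_bad] at hbad
  · intro h
    refine ⟨canonical c₀ n, by simp [interpreterProc], (evalClosed_canonical h).satTGD_rules,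
      fun R hR => ?_, fun q _ => answers_mono instFacts_le_canonical⟩
    obtain rfl : R = rBad := by simpa [interpreterProc] using hR
    rw [toInstance_instFacts_bad, canonical_bad]

theorem primrec_instFacts (c₀ : Code) : Primrec (instFacts c₀) := by
  have hcons {α β : Type} [Primcodable α] [Primcodable β] {f : α → β} {g : α → List β}
      (hf : Primrec f) (hg : Primrec g) : Primrec fun a => f a :: g a :=
    Primrec.list_cons.comp hf hg
  have hsingle : Primrec fun k : ℕ => [k] := hcons Primrec.id (Primrec.const [])
  have hn : Primrec fun n : ℕ => encode [n] := Primrec.encode.comp hsingle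
  have hfacts : Primrec fun n : ℕ => [(rZero, [0]), (rNil, [encode ([] : List ℕ)]),
      (rList, [encode ([] : List ℕ)]), (rList, [encode [n]]),
      (rCons, [encode [n], n, encode ([] : List ℕ)]), (rInput, [encode [n]])] :=
    hcons (Primrec.const _) <| hcons (Primrec.const _) <| hcons (Primrec.const _) <|
      hcons ((Primrec.const _).pair (hcons hn (Primrec.const []))) <|
      hcons ((Primrec.const _).pair (hcons hn (hcons Primrec.id (Primrec.const _)))) <|
      hcons ((Primrec.const _).pair (hcons hn (Primrec.const []))) (Primrec.const [])
  have hnum : Primrec fun n => (List.range (n + 1)).map fun k => (rNum, [k]) :=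
    Primrec.list_map (Primrec.list_range.comp Primrec.succ)
      ((Primrec.const rNum).pair (hsingle.comp Primrec.snd)).to₂
  have hS : Primrec fun n => (List.range n).map fun k => (rSucc, [k, k + 1]) :=
    Primrec.list_map Primrec.list_range ((Primrec.const rSucc).pair
      (hcons Primrec.snd (hsingle.comp (Primrec.succ.comp Primrec.snd)))).to₂
  exact hcons (Primrec.const _) (Primrec.list_append.comp (Primrec.const _)
    (Primrec.list_append.comp (Primrec.list_append.comp hfacts hnum) hS))

end TGDInterpreter

/-- Nonemptiness of outcomes is undecidable: there is a fixed procedure `P`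
with no preconditions and only tgd postconditions such that no algorithm
decides, given a finite instance `I`, whether `outcomes_P(I)` is nonempty. -/
theorem nonemptiness_undecidable :
    ∃ P : Proc, P.pre = [] ∧
      ¬ ComputablePred (fun L : FinInst => (procOutcomes P (toInstance L)).Nonempty) := by
  obtain ⟨c₀, hc₀⟩ := Code.exists_not_computablePred_eval_dom
  refine ⟨TGDInterpreter.interpreterProc, rfl, fun h => hc₀ ?_⟩
  have hred := ComputablePred.computable_of_manyOneReducible
    (ManyOneReducible.mk _ (TGDInterpreter.primrec_instFacts c₀).to_comp) h
  simpa only [TGDInterpreter.procOutcomes_nonempty_iff, not_not] using hred.not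
end
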